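/- Let G = Σ_{i=1}^N w_i g_i g_iᵀ with w_i > 0 and g_i = (cos β_i, sin β_i), and suppose w_k > (1/2) Σ_{i=1}^N w_i for some k. Then det(G) ≤ w_k · (Σ_{i≠k} w_i), with equality if and only if g_i is orthogonal to g_k for all i ≠ k. -/

import Mathlib

/-! Rotate coordinates so that `g_k = (1, 0)` and write `u_i, v_i` for the coordinates of `g_i`.
Splitting off the `k`-th term, `det G = (w_k + a) c - b²` with `a = ∑_{i≠k} w_i u_i²`,
`b = ∑_{i≠k} w_i u_i v_i`, `c = ∑_{i≠k} w_i v_i²`, and `a + c = R := ∑_{i≠k} w_i`. Hence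
`w_k R - det G = a (w_k - c) + b²`, which is nonnegative because `c ≤ R < w_k`, and vanishes
exactly when `a = 0` (then `b = 0` by Cauchy–Schwarz), i.e. when every `g_i` is orthogonal
to `g_k`. -/

open Matrix Real Finset

noncomputable def gvec (β : ℝ) : Fin 2 → ℝ := ![Real.cos β, Real.sin β]

lemma gvec_dotProduct_gvec (α β : ℝ) : gvec α ⬝ᵥ gvec β = cos (β - α) := by
  simp only [gvec, dotProduct, Fin.sum_univ_two, cons_val_zero, cons_val_one, cons_val_fin_one,
    cos_sub]
  ring

lemma gvec_sub (β α : ℝ) : gvec (β - α) = !![cos α, sin α; -sin α, cos α] *ᵥ gvec β := by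
  ext i
  fin_cases i
  · simp [gvec, cos_sub]
  · simp [gvec, sin_sub]
    ring

lemma vecMulVec_mulVec_self {n R : Type*} [Fintype n] [CommSemiring R]
    (A : Matrix n n R) (x : n → R) :
    vecMulVec (A *ᵥ x) (A *ᵥ x) = A * vecMulVec x x * Aᵀ := by
  rw [mul_vecMulVec, vecMulVec_mul, vecMul_transpose]

section Information

variable {ι : Type*} [Fintype ι] (w β : ι → ℝ)

lemma det_sum_smul_vecMulVec_gvec_sub (α : ℝ) :
    (∑ i, w i • vecMulVec (gvec (β i - α)) (gvec (β i - α))).det =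
      (∑ i, w i • vecMulVec (gvec (β i)) (gvec (β i))).det := by
  set Q : Matrix (Fin 2) (Fin 2) ℝ := !![cos α, sin α; -sin α, cos α]
  have hQ : Q.det = 1 := by
    rw [det_fin_two_of]
    linear_combination cos_sq_add_sin_sq α
  have hG : ∑ i, w i • vecMulVec (gvec (β i - α)) (gvec (β i - α)) =
      Q * (∑ i, w i • vecMulVec (gvec (β i)) (gvec (β i))) * Qᵀ := by
    simp_rw [gvec_sub _ α, vecMulVec_mulVec_self, Finset.mul_sum, Finset.sum_mul,
      Matrix.mul_smul, Matrix.smul_mul]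
    rfl
  rw [hG, det_mul, det_mul, det_transpose, hQ, one_mul, mul_one]

lemma det_sum_smul_vecMulVec_gvec :
    (∑ i, w i • vecMulVec (gvec (β i)) (gvec (β i))).det =
      (∑ i, w i * cos (β i) ^ 2) * (∑ i, w i * sin (β i) ^ 2) -
        (∑ i, w i * (cos (β i) * sin (β i))) ^ 2 := by
  rw [det_fin_two]
  simp [Matrix.sum_apply, gvec, sq, mul_comm (sin _) (cos _)]

lemma det_sum_smul_vecMulVec_gvec_eq_erase [DecidableEq ι] (k : ι) :
    (∑ i, w i • vecMulVec (gvec (β i)) (gvec (β i))).det =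
      (w k + ∑ i ∈ univ.erase k, w i * cos (β i - β k) ^ 2) *
          (∑ i ∈ univ.erase k, w i * sin (β i - β k) ^ 2) -
        (∑ i ∈ univ.erase k, w i * (cos (β i - β k) * sin (β i - β k))) ^ 2 := by
  rw [← det_sum_smul_vecMulVec_gvec_sub w β (β k), det_sum_smul_vecMulVec_gvec,
    ← add_sum_erase _ _ (mem_univ k), ← add_sum_erase _ _ (mem_univ k),
    ← add_sum_erase _ _ (mem_univ k)]
  simp

end Information

section Bound

variable {w a b c R : ℝ}

lemma mul_sub_add_mul_sub_sq (hac : a + c = R) :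
    w * R - ((w + a) * c - b ^ 2) = a * (w - c) + b ^ 2 := by
  rw [← hac]; ring

lemma add_mul_sub_sq_le (hR : R < w) (ha : 0 ≤ a) (hac : a + c = R) :
    (w + a) * c - b ^ 2 ≤ w * R := by
  have hcw : 0 ≤ w - c := by linarith
  nlinarith [mul_sub_add_mul_sub_sq (w := w) (b := b) hac, mul_nonneg ha hcw, sq_nonneg b]

lemma add_mul_sub_sq_eq_iff (hR : R < w) (ha : 0 ≤ a) (hac : a + c = R) (hb : b ^ 2 ≤ a * c) :
    (w + a) * c - b ^ 2 = w * R ↔ a = 0 := by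
  have hgap := mul_sub_add_mul_sub_sq (w := w) (b := b) hac
  have hcw : 0 < w - c := by linarith
  constructor
  · intro h
    have hprod : a * (w - c) = 0 := by nlinarith [mul_nonneg ha hcw.le, sq_nonneg b]
    exact (mul_eq_zero.1 hprod).resolve_right hcw.ne'
  · rintro rfl
    have hb0 : b ^ 2 = 0 := le_antisymm (by simpa using hb) (sq_nonneg b)
    linarith

end Bound

theorem det_upper_bound_irregular {N : ℕ} (w β : Fin N → ℝ) (hw : ∀ i, 0 < w i)
    (k : Fin N) (hk : (1 / 2) * ∑ i, w i < w k) :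
    (∑ i, w i • vecMulVec (gvec (β i)) (gvec (β i))).det ≤
      w k * (∑ i ∈ Finset.univ.erase k, w i) ∧
    ((∑ i, w i • vecMulVec (gvec (β i)) (gvec (β i))).det =
        w k * (∑ i ∈ Finset.univ.erase k, w i) ↔
      ∀ i, i ≠ k → gvec (β k) ⬝ᵥ gvec (β i) = 0) := by
  set R := ∑ i ∈ univ.erase k, w i
  set a := ∑ i ∈ univ.erase k, w i * cos (β i - β k) ^ 2
  set b := ∑ i ∈ univ.erase k, w i * (cos (β i - β k) * sin (β i - β k))
  set c := ∑ i ∈ univ.erase k, w i * sin (β i - β k) ^ 2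
  have hac : a + c = R := by
    rw [← sum_add_distrib]
    exact sum_congr rfl fun i _ => by linear_combination w i * cos_sq_add_sin_sq (β i - β k)
  have hR : R < w k := by
    have := add_sum_erase univ w (mem_univ k)
    linarith
  have ha : 0 ≤ a := sum_nonneg fun i _ => mul_nonneg (hw i).le (sq_nonneg _)
  have hb : b ^ 2 ≤ a * c :=
    sum_sq_le_sum_mul_sum_of_sq_le_mul _ (fun i _ => mul_nonneg (hw i).le (sq_nonneg _))
      (fun i _ => mul_nonneg (hw i).le (sq_nonneg _)) (fun i _ => le_of_eq (by ring))
  have ha0 : a = 0 ↔ ∀ i, i ≠ k → gvec (β k) ⬝ᵥ gvec (β i) = 0 := by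
    simp_rw [a, sum_eq_zero_iff_of_nonneg fun i _ => mul_nonneg (hw i).le (sq_nonneg _),
      mem_erase, mul_eq_zero, (hw _).ne', false_or, pow_eq_zero_iff two_ne_zero,
      gvec_dotProduct_gvec, mem_univ, and_true]
  rw [det_sum_smul_vecMulVec_gvec_eq_erase]
  exact ⟨add_mul_sub_sq_le hR ha hac, (add_mul_sub_sq_eq_iff hR ha hac hb).trans ha0⟩
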